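/- Let δ₁, δ₂ > 0. Suppose W^CDT = [w₁, w₂] minimizes ‖w₁‖² + ‖w₂‖² subject to (δ_{y_i} w_{y_i} - δ_c w_c)ᵀ h_i ≥ 1 for c ≠ y_i, and w* minimizes ‖w‖² subject to υ_i wᵀ h_i ≥ 1 (the standard binary SVM with labels υ_i = 1 if y_i = 1 and υ_i = -1 if y_i = 2). Then w₁ - w₂ = ((δ₁+δ₂)/(δ₁²+δ₂²)) w*; in particular the classification rules sign((w₁-w₂)ᵀx) and sign(w*ᵀx) coincide. -/

import Mathlib

/-!
The margin map `w ↦ δ₀ w₀ - δ₁ w₁` sends CDT-feasible pairs onto SVM-feasible vectors, and every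
SVM-feasible `u` comes back as the margin of a centered pair (`δ₁ w₀ + δ₀ w₁ = 0`). By the
Lagrange identity `‖δ₀x - δ₁y‖² + ‖δ₁x + δ₀y‖² = (δ₀² + δ₁²)(‖x‖² + ‖y‖²)`, the scaled CDT
objective dominates the squared norm of the margin, with equality exactly for centered pairs.
Comparing the CDT optimum with the centered lift of `w*` therefore forces it to be centered with
margin of norm at most `‖w*‖`; the minimum-norm point of a convex set being unique, that margin
is `w*`.
-/

open scoped InnerProductSpace

section InnerProductSpace

variable {E : Type*} [NormedAddCommGroup E] [InnerProductSpace ℝ E]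

theorem Convex.eq_of_norm_le_of_forall_norm_le {K : Set E} (hK : Convex ℝ K) {u w : E}
    (hu : u ∈ K) (hw : w ∈ K) (hmin : ∀ z ∈ K, ‖w‖ ≤ ‖z‖) (hle : ‖u‖ ≤ ‖w‖) : u = w := by
  have hmid : ‖w‖ ≤ ‖u + w‖ / 2 := by
    have := hmin _ (hK hu hw (by norm_num : (0 : ℝ) ≤ 1 / 2) (by norm_num : (0 : ℝ) ≤ 1 / 2)
      (by norm_num))
    rwa [← smul_add, norm_smul, Real.norm_of_nonneg (by norm_num), one_div_mul_eq_div] at this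
  have hpar := parallelogram_law_with_norm ℝ u w
  have hsq : ‖u - w‖ ^ 2 ≤ 0 := by
    nlinarith [norm_nonneg u, norm_nonneg w]
  rw [← sub_eq_zero, ← norm_eq_zero]
  exact pow_eq_zero_iff two_ne_zero |>.mp (le_antisymm hsq (sq_nonneg _))

theorem norm_smul_sub_smul_sq_add_norm_smul_add_smul_sq (a b : ℝ) (x y : E) :
    ‖a • x - b • y‖ ^ 2 + ‖b • x + a • y‖ ^ 2 = (a ^ 2 + b ^ 2) * (‖x‖ ^ 2 + ‖y‖ ^ 2) := by
  simp only [norm_sub_sq_real, norm_add_sq_real, norm_smul, real_inner_smul_left,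
    real_inner_smul_right, mul_pow, Real.norm_eq_abs, sq_abs]
  ring

theorem sub_eq_smul_of_smul_add_smul_eq_zero {a b : ℝ} (hab : a ^ 2 + b ^ 2 ≠ 0) {x y : E}
    (h : b • x + a • y = 0) : x - y = ((a + b) / (a ^ 2 + b ^ 2)) • (a • x - b • y) := by
  apply smul_right_injective E hab
  dsimp only
  rw [smul_smul, mul_div_cancel₀ _ hab]
  linear_combination (norm := module) (b - a) • h

variable {ι : Type*}

def svmFeasible (h : ι → E) (υ : ι → ℝ) : Set E :=
  {u | ∀ i, υ i * ⟪u, h i⟫_ℝ ≥ 1}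

theorem convex_svmFeasible (h : ι → E) (υ : ι → ℝ) : Convex ℝ (svmFeasible h υ) := by
  intro u hu v hv a b ha hb hab i
  have hcomb : υ i * ⟪a • u + b • v, h i⟫_ℝ =
      a * (υ i * ⟪u, h i⟫_ℝ) + b * (υ i * ⟪v, h i⟫_ℝ) := by
    rw [inner_add_left, real_inner_smul_left, real_inner_smul_left]
    ring
  rw [hcomb, ge_iff_le, ← hab]
  exact add_le_add (le_mul_of_one_le_right ha (hu i)) (le_mul_of_one_le_right hb (hv i))

def cdtFeasible (h : ι → E) (y : ι → Fin 2) (δ : Fin 2 → ℝ) : Set (Fin 2 → E) :=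
  {w | ∀ i, ∀ c, c ≠ y i → ⟪δ (y i) • w (y i) - δ c • w c, h i⟫_ℝ ≥ 1}

def cdtMargin (δ : Fin 2 → ℝ) (w : Fin 2 → E) : E :=
  δ 0 • w 0 - δ 1 • w 1

theorem inner_smul_sub_smul_eq_sign_mul_inner_cdtMargin (δ : Fin 2 → ℝ) (w : Fin 2 → E) (x : E)
    {k c : Fin 2} (hc : c ≠ k) :
    ⟪δ k • w k - δ c • w c, x⟫_ℝ = (if k = 0 then 1 else -1) * ⟪cdtMargin δ w, x⟫_ℝ := by
  fin_cases k <;> fin_cases c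
  all_goals first
    | exact absurd rfl hc
    | simp [cdtMargin, ← inner_neg_left]

theorem mem_cdtFeasible_iff {h : ι → E} {y : ι → Fin 2} {υ : ι → ℝ}
    (hυ : ∀ i, υ i = if y i = 0 then 1 else -1) (δ : Fin 2 → ℝ) (w : Fin 2 → E) :
    w ∈ cdtFeasible h y δ ↔ cdtMargin δ w ∈ svmFeasible h υ := by
  simp only [cdtFeasible, svmFeasible, Set.mem_ofPred_eq, hυ]
  refine ⟨fun hw i => ?_, fun hw i c hc => ?_⟩
  · rw [← inner_smul_sub_smul_eq_sign_mul_inner_cdtMargin δ w (h i) (c := y i + 1) (by simp)]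
    exact hw i _ (by simp)
  · rw [inner_smul_sub_smul_eq_sign_mul_inner_cdtMargin δ w (h i) hc]
    exact hw i

noncomputable def cdtLift (δ : Fin 2 → ℝ) (u : E) : Fin 2 → E :=
  ![(δ 0 / (δ 0 ^ 2 + δ 1 ^ 2)) • u, -(δ 1 / (δ 0 ^ 2 + δ 1 ^ 2)) • u]

theorem cdtMargin_cdtLift {δ : Fin 2 → ℝ} (hδ : δ 0 ^ 2 + δ 1 ^ 2 ≠ 0) (u : E) :
    cdtMargin δ (cdtLift δ u) = u := by
  have hcoef : δ 0 * (δ 0 / (δ 0 ^ 2 + δ 1 ^ 2)) - δ 1 * -(δ 1 / (δ 0 ^ 2 + δ 1 ^ 2)) = 1 := by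
    field_simp
    ring
  simp only [cdtMargin, cdtLift, Matrix.cons_val_zero, Matrix.cons_val_one, smul_smul,
    ← sub_smul, hcoef, one_smul]

theorem cdtLift_centered (δ : Fin 2 → ℝ) (u : E) :
    δ 1 • cdtLift δ u 0 + δ 0 • cdtLift δ u 1 = 0 := by
  simp only [cdtLift, Matrix.cons_val_zero, Matrix.cons_val_one, smul_smul, ← add_smul]
  rw [mul_neg, ← sub_eq_add_neg, mul_div_left_comm, sub_self, zero_smul]

theorem norm_cdtMargin_sq_add_norm_sq (δ : Fin 2 → ℝ) (w : Fin 2 → E) :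
    ‖cdtMargin δ w‖ ^ 2 + ‖δ 1 • w 0 + δ 0 • w 1‖ ^ 2 =
      (δ 0 ^ 2 + δ 1 ^ 2) * (‖w 0‖ ^ 2 + ‖w 1‖ ^ 2) :=
  norm_smul_sub_smul_sq_add_norm_smul_add_smul_sq _ _ _ _

theorem mul_norm_cdtLift_sq {δ : Fin 2 → ℝ} (hδ : δ 0 ^ 2 + δ 1 ^ 2 ≠ 0) (u : E) :
    (δ 0 ^ 2 + δ 1 ^ 2) * (‖cdtLift δ u 0‖ ^ 2 + ‖cdtLift δ u 1‖ ^ 2) = ‖u‖ ^ 2 := by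
  rw [← norm_cdtMargin_sq_add_norm_sq, cdtMargin_cdtLift hδ, cdtLift_centered, norm_zero,
    zero_pow two_ne_zero, add_zero]

end InnerProductSpace

theorem cdt_equals_ce {d n : ℕ}
    (h : Fin n → EuclideanSpace ℝ (Fin d)) (y : Fin n → Fin 2)
    (δ : Fin 2 → ℝ) (hδ : ∀ c, 0 < δ c)
    (w : Fin 2 → EuclideanSpace ℝ (Fin d))
    (feas : ∀ i, ∀ c, c ≠ y i → ⟪δ (y i) • w (y i) - δ c • w c, h i⟫_ℝ ≥ 1)
    (opt : ∀ w' : Fin 2 → EuclideanSpace ℝ (Fin d),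
      (∀ i, ∀ c, c ≠ y i → ⟪δ (y i) • w' (y i) - δ c • w' c, h i⟫_ℝ ≥ 1) →
      ‖w 0‖ ^ 2 + ‖w 1‖ ^ 2 ≤ ‖w' 0‖ ^ 2 + ‖w' 1‖ ^ 2)
    (υ : Fin n → ℝ) (hυ : ∀ i, υ i = if y i = 0 then 1 else -1)
    (wstar : EuclideanSpace ℝ (Fin d))
    (feasS : ∀ i, υ i * ⟪wstar, h i⟫_ℝ ≥ 1)
    (optS : ∀ w' : EuclideanSpace ℝ (Fin d),
      (∀ i, υ i * ⟪w', h i⟫_ℝ ≥ 1) → ‖wstar‖ ^ 2 ≤ ‖w'‖ ^ 2) :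
    w 0 - w 1 = ((δ 0 + δ 1) / ((δ 0) ^ 2 + (δ 1) ^ 2)) • wstar ∧
    ∀ x : EuclideanSpace ℝ (Fin d),
      (0 < ⟪w 0 - w 1, x⟫_ℝ ↔ 0 < ⟪wstar, x⟫_ℝ) ∧
      (⟪w 0 - w 1, x⟫_ℝ < 0 ↔ ⟪wstar, x⟫_ℝ < 0) := by
  have hS : 0 < δ 0 ^ 2 + δ 1 ^ 2 := by have := hδ 0; positivity
  have hfeas : cdtMargin δ w ∈ svmFeasible h υ := (mem_cdtFeasible_iff hυ δ w).mp feas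
  have hlift := opt (cdtLift δ wstar)
    ((mem_cdtFeasible_iff hυ δ _).mpr (by rwa [cdtMargin_cdtLift hS.ne']))
  have hsq : ‖cdtMargin δ w‖ ^ 2 + ‖δ 1 • w 0 + δ 0 • w 1‖ ^ 2 ≤ ‖wstar‖ ^ 2 := by
    rw [norm_cdtMargin_sq_add_norm_sq, ← mul_norm_cdtLift_sq hS.ne' wstar]
    exact mul_le_mul_of_nonneg_left hlift hS.le
  have hmin := optS _ hfeas
  have hcenter : δ 1 • w 0 + δ 0 • w 1 = 0 := by
    rw [← norm_eq_zero, ← sq_eq_zero_iff]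
    exact le_antisymm (by linarith) (sq_nonneg _)
  have hmargin_le : ‖cdtMargin δ w‖ ≤ ‖wstar‖ :=
    (sq_le_sq₀ (norm_nonneg _) (norm_nonneg _)).mp (by simpa [hcenter] using hsq)
  have hmargin : cdtMargin δ w = wstar :=
    (convex_svmFeasible h υ).eq_of_norm_le_of_forall_norm_le hfeas feasS
      (fun z hz => (sq_le_sq₀ (norm_nonneg _) (norm_nonneg _)).mp (optS z hz)) hmargin_le
  have hdiff : w 0 - w 1 = ((δ 0 + δ 1) / (δ 0 ^ 2 + δ 1 ^ 2)) • wstar := by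
    rw [sub_eq_smul_of_smul_add_smul_eq_zero hS.ne' hcenter, ← hmargin, cdtMargin]
  have hcoef : 0 < (δ 0 + δ 1) / (δ 0 ^ 2 + δ 1 ^ 2) := by
    have := hδ 0; have := hδ 1; positivity
  refine ⟨hdiff, fun x => ?_⟩
  rw [hdiff, real_inner_smul_left]
  exact ⟨smul_pos_iff_of_pos_left hcoef, smul_neg_iff_of_pos_left hcoef⟩
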